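/- arXiv:2205.03157 — 2 statements merged into one kernel-verified Lean document; each statement's English description precedes it below -/
import Mathlib

section
/- Let P ⊂ ℂ be a finite set of t > 1 points, and let δ(P) denote the minimal Euclidean distance between two distinct points of P. Then δ(P) < (2/√t) · diam(P). -/
/-!
Cover the axis-parallel square of side `diam P` containing `P` by an `m × n` grid. If
`m n < t`, two points share a cell, so their distance is at most `diam P · √(1/m² + 1/n²)`,
which is `< 2 diam P / √t` for suitable `m, n` as soon as `t ≥ 5`. For `t ≤ 3` any pair
works since `2 / √t > 1`; for `t = 4` the claim says that the four points are not pairwise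
at distance `diam P`, and the plane contains no four pairwise equidistant points.
-/

open Finset Metric

/-- `[0, L]` cut into `m` cells of length `L / m`; the cap `m - 1` puts `x = L` into the last
cell. -/
noncomputable def cellIndex (m : ℕ) (L x : ℝ) : ℕ := min (m - 1) ⌊m * x / L⌋₊

lemma cellIndex_lt {m : ℕ} (hm : 0 < m) (L x : ℝ) : cellIndex m L x < m := by
  unfold cellIndex; omega

lemma cellIndex_le_and_le_add_one {m : ℕ} (hm : 0 < m) {L x : ℝ} (hL : 0 < L)
    (hx : x ∈ Set.Icc 0 L) :
    (cellIndex m L x : ℝ) ≤ m * x / L ∧ m * x / L ≤ cellIndex m L x + 1 := by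
  obtain ⟨hx0, hxL⟩ := hx
  have hu0 : 0 ≤ m * x / L := by positivity
  have hum : m * x / L ≤ m := by
    rw [div_le_iff₀ hL]; exact mul_le_mul_of_nonneg_left hxL (Nat.cast_nonneg m)
  unfold cellIndex
  refine ⟨(Nat.cast_le.mpr (min_le_right _ _)).trans (Nat.floor_le hu0), ?_⟩
  rcases le_total ⌊(m : ℝ) * x / L⌋₊ (m - 1) with h | h
  · rw [min_eq_right h]; exact (Nat.lt_floor_add_one _).le
  · rw [min_eq_left h, Nat.cast_sub hm, Nat.cast_one, sub_add_cancel]; exact hum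

lemma abs_sub_le_of_cellIndex_eq {m : ℕ} (hm : 0 < m) {L x y : ℝ} (hL : 0 < L)
    (hx : x ∈ Set.Icc 0 L) (hy : y ∈ Set.Icc 0 L) (h : cellIndex m L x = cellIndex m L y) :
    |x - y| ≤ L / m := by
  obtain ⟨hx₁, hx₂⟩ := cellIndex_le_and_le_add_one hm hL hx
  obtain ⟨hy₁, hy₂⟩ := cellIndex_le_and_le_add_one hm hL hy
  rw [h] at hx₁ hx₂
  have hmR : (0 : ℝ) < m := by exact_mod_cast hm
  have key : |m * x / L - m * y / L| ≤ 1 := abs_sub_le_iff.mpr ⟨by linarith, by linarith⟩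
  rw [← sub_div, ← mul_sub, abs_div, abs_mul, abs_of_pos hL, abs_of_pos hmR,
    div_le_one hL] at key
  rw [le_div_iff₀ hmR, mul_comm]
  exact key

section PseudoMetric

variable {α : Type*} [PseudoMetricSpace α]

lemma exists_cell_partition (f : α → ℝ) (hf : LipschitzWith 1 f) {P : Finset α}
    (hP : 0 < diam (P : Set α)) {m : ℕ} (hm : 0 < m) :
    ∃ c : α → ℕ, (∀ p, c p < m) ∧
      ∀ p ∈ P, ∀ q ∈ P, c p = c q → |f p - f q| ≤ diam (P : Set α) / m := by
  have hne : P.Nonempty := by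
    rw [nonempty_iff_ne_empty]; rintro rfl; simp at hP
  obtain ⟨p₀, hp₀, hmin⟩ := P.exists_min_image f hne
  have hmem : ∀ p ∈ P, f p - f p₀ ∈ Set.Icc 0 (diam (P : Set α)) := fun p hp =>
    ⟨sub_nonneg.mpr (hmin p hp), (le_abs_self _).trans <| by
      simpa [Real.dist_eq] using (hf.dist_le_mul p p₀).trans
        (by simpa using dist_le_diam_of_mem P.finite_toSet.isBounded hp hp₀)⟩
  refine ⟨fun p => cellIndex m (diam (P : Set α)) (f p - f p₀), fun p => cellIndex_lt hm _ _,
    fun p hp q hq h => ?_⟩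
  simpa using abs_sub_le_of_cellIndex_eq hm hP (hmem p hp) (hmem q hq) h

end PseudoMetric

lemma exists_ne_abs_sub_le_of_mul_lt_card {α : Type*} [MetricSpace α] (f g : α → ℝ)
    (hf : LipschitzWith 1 f) (hg : LipschitzWith 1 g) {P : Finset α} {m n : ℕ}
    (hm : 0 < m) (hn : 0 < n) (hcard : m * n < #P) :
    ∃ x ∈ P, ∃ y ∈ P, x ≠ y ∧
      |f x - f y| ≤ diam (P : Set α) / m ∧ |g x - g y| ≤ diam (P : Set α) / n := by
  have hD : 0 < diam (P : Set α) := by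
    refine diam_pos (one_lt_card_iff_nontrivial.mp ?_) P.finite_toSet.isBounded
    have := Nat.mul_pos hm hn
    omega
  obtain ⟨c, hc, hcf⟩ := exists_cell_partition f hf hD hm
  obtain ⟨d, hd, hdg⟩ := exists_cell_partition g hg hD hn
  obtain ⟨x, hx, y, hy, hxy, hcd⟩ := exists_ne_map_eq_of_card_lt_of_maps_to
    (t := range m ×ˢ range n) (f := fun p => (c p, d p)) (by simpa using hcard)
    (fun p _ => by simp [hc, hd])
  exact ⟨x, hx, y, hy, hxy, hcf x hx y hy (congrArg Prod.fst hcd),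
    hdg x hx y hy (congrArg Prod.snd hcd)⟩

lemma Complex.dist_lt_of_abs_re_sub_le_of_abs_im_sub_le {x y : ℂ} {D : ℝ} {m n t : ℕ}
    (hm : 0 < m) (hn : 0 < n) (ht : 0 < t) (hD : 0 < D)
    (hre : |x.re - y.re| ≤ D / m) (him : |x.im - y.im| ≤ D / n)
    (hmnt : (m ^ 2 + n ^ 2) * t < 4 * (m ^ 2 * n ^ 2)) :
    dist x y < 2 / √t * D := by
  have hmR : (0 : ℝ) < m := by exact_mod_cast hm
  have hnR : (0 : ℝ) < n := by exact_mod_cast hn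
  have htR : (0 : ℝ) < t := by exact_mod_cast ht
  have hmntR : ((m : ℝ) ^ 2 + n ^ 2) * t < 4 * (m ^ 2 * n ^ 2) := by exact_mod_cast hmnt
  have hsq : dist x y ^ 2 < (2 / √t * D) ^ 2 := calc
    dist x y ^ 2 = |x.re - y.re| ^ 2 + |x.im - y.im| ^ 2 := by
      rw [dist_eq_re_im, Real.sq_sqrt (by positivity), sq_abs, sq_abs]
    _ ≤ (D / m) ^ 2 + (D / n) ^ 2 := by gcongr
    _ = D ^ 2 * (m ^ 2 + n ^ 2) / (m ^ 2 * n ^ 2) := by field_simp; ring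
    _ < D ^ 2 * 4 / t := by
      rw [div_lt_div_iff₀ (by positivity) htR, mul_assoc, mul_assoc]
      exact mul_lt_mul_of_pos_left hmntR (by positivity)
    _ = (2 / √t * D) ^ 2 := by rw [mul_pow, div_pow, Real.sq_sqrt htR.le]; ring
  exact lt_of_pow_lt_pow_left₀ 2 (by positivity) hsq

theorem exists_dist_lt_of_grid (P : Finset ℂ) {m n : ℕ} (hm : 0 < m) (hn : 0 < n)
    (hmn : m * n < #P) (hmnP : (m ^ 2 + n ^ 2) * #P < 4 * (m ^ 2 * n ^ 2)) :
    ∃ x ∈ P, ∃ y ∈ P, x ≠ y ∧ dist x y < 2 / √(#P : ℕ) * diam (P : Set ℂ) := by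
  obtain ⟨x, hx, y, hy, hxy, hre, him⟩ := exists_ne_abs_sub_le_of_mul_lt_card _ _
    (RCLike.lipschitzWith_re (K := ℂ)) (RCLike.lipschitzWith_im (K := ℂ)) hm hn hmn
  refine ⟨x, hx, y, hy, hxy, Complex.dist_lt_of_abs_re_sub_le_of_abs_im_sub_le hm hn
    (by omega) ?_ hre him hmnP⟩
  exact diam_pos ⟨x, hx, y, hy, hxy⟩ P.finite_toSet.isBounded

lemma exists_grid_dims {t : ℕ} (ht : 5 ≤ t) :
    ∃ m n : ℕ, 0 < m ∧ 0 < n ∧ m * n < t ∧ (m ^ 2 + n ^ 2) * t < 4 * (m ^ 2 * n ^ 2) := by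
  rcases eq_or_ne t 8 with rfl | h8
  · exact ⟨2, 3, by norm_num⟩
  rcases eq_or_ne t 9 with rfl | h9
  · exact ⟨2, 4, by norm_num⟩
  set k := Nat.sqrt (t - 1)
  have hk2 : 2 ≤ k := Nat.le_sqrt.mpr (by omega)
  have hkk : k * k ≤ t - 1 := Nat.sqrt_le (t - 1)
  have htk : t - 1 < (k + 1) * (k + 1) := Nat.lt_succ_sqrt (t - 1)
  have ht2k : t < 2 * (k * k) := by
    rcases le_or_gt t 7 with h7 | h7
    · nlinarith
    · have hk3 : 3 ≤ k := Nat.le_sqrt.mpr (by omega)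
      have : t ≤ (k + 1) * (k + 1) := by omega
      nlinarith
  exact ⟨k, k, by omega, by omega, by omega, by nlinarith⟩

lemma Complex.norm_sub_ne_of_norm_eq {u v w : ℂ} {r : ℝ} (hr : 0 < r) (hu : ‖u‖ = r)
    (hv : ‖v‖ = r) (hw : ‖w‖ = r) (huv : ‖u - v‖ = r) (huw : ‖u - w‖ = r) : ‖v - w‖ ≠ r := by
  intro hvw
  have coords : ∀ z : ℂ, ‖z‖ = r → z.re ^ 2 + z.im ^ 2 = r ^ 2 := fun z hz => by
    rw [← hz, Complex.sq_norm, Complex.normSq_apply]; ring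
  have Hu := coords u hu
  have Hv := coords v hv
  have Hw := coords w hw
  have Huv := coords _ huv
  have Huw := coords _ huw
  have Hvw := coords _ hvw
  simp only [Complex.sub_re, Complex.sub_im] at Huv Huw Hvw
  have huv' : u.re * v.re + u.im * v.im = r ^ 2 / 2 := by
    linear_combination (Hu + Hv - Huv) / 2
  have huw' : u.re * w.re + u.im * w.im = r ^ 2 / 2 := by
    linear_combination (Hu + Hw - Huw) / 2
  have hvw' : v.re * w.re + v.im * w.im = r ^ 2 / 2 := by
    linear_combination (Hv + Hw - Hvw) / 2
  -- Lagrange's identity: `(u × v)² = (u × w)² = 3r⁴/4`, whereas `(u × v)(u × w) = r⁴/4`.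
  have hX : (u.re * v.im - u.im * v.re) ^ 2 = 3 / 4 * r ^ 4 := by
    linear_combination (v.re ^ 2 + v.im ^ 2) * Hu + r ^ 2 * Hv
      - (u.re * v.re + u.im * v.im + r ^ 2 / 2) * huv'
  have hY : (u.re * w.im - u.im * w.re) ^ 2 = 3 / 4 * r ^ 4 := by
    linear_combination (w.re ^ 2 + w.im ^ 2) * Hu + r ^ 2 * Hw
      - (u.re * w.re + u.im * w.im + r ^ 2 / 2) * huw'
  have hXY : (u.re * v.im - u.im * v.re) * (u.re * w.im - u.im * w.re) = r ^ 4 / 4 := by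
    linear_combination (v.re * w.re + v.im * w.im) * Hu + r ^ 2 * hvw'
      - (u.re * w.re + u.im * w.im) * huv' - r ^ 2 / 2 * huw'
  have : (r ^ 4 / 4) ^ 2 = (3 / 4 * r ^ 4) ^ 2 := by rw [← hXY, mul_pow, hX, hY, sq]
  nlinarith [pow_pos hr 8]

lemma Complex.exists_dist_ne_of_card_eq_four {P : Finset ℂ} (hP : #P = 4) (r : ℝ) :
    ∃ x ∈ P, ∃ y ∈ P, x ≠ y ∧ dist x y ≠ r := by
  obtain ⟨a, b, c, d, hab, hac, had, hbc, hbd, hcd, rfl⟩ := card_eq_four.mp hP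
  by_contra! h
  have hr : 0 < r := h a (by simp) b (by simp) hab ▸ dist_pos.mpr hab
  have hdist : ∀ x ∈ ({a, b, c, d} : Finset ℂ), ∀ y ∈ ({a, b, c, d} : Finset ℂ), x ≠ y →
      ‖(x - a) - (y - a)‖ = r := fun x hx y hy hxy => by
    rw [sub_sub_sub_cancel_right, ← dist_eq_norm]; exact h x hx y hy hxy
  have hnorm : ∀ x ∈ ({a, b, c, d} : Finset ℂ), x ≠ a → ‖x - a‖ = r := fun x hx hxa => by
    rw [← dist_eq_norm]; exact h x hx a (by simp) hxa
  exact Complex.norm_sub_ne_of_norm_eq hr (hnorm b (by simp) hab.symm)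
    (hnorm c (by simp) hac.symm) (hnorm d (by simp) had.symm)
    (hdist b (by simp) c (by simp) hbc) (hdist b (by simp) d (by simp) hbd)
    (hdist c (by simp) d (by simp) hcd)

/-- If `P ⊂ ℂ` is a finite set of `t ≥ 2` points, then the minimal distance between
two distinct points of `P` is `< (2 / √t) * diam P`: there exist two distinct points
of `P` at distance `< (2 / √t) * diam P`. -/
theorem stmt_1 (P : Finset ℂ) (t : ℕ) (ht : 2 ≤ t) (hcard : P.card = t) :
    ∃ x ∈ P, ∃ y ∈ P, x ≠ y ∧
      dist x y < 2 / Real.sqrt t * Metric.diam (P : Set ℂ) := by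
  subst hcard
  have hbdd : Bornology.IsBounded (P : Set ℂ) := P.finite_toSet.isBounded
  rcases lt_trichotomy #P 4 with h | h | h
  · obtain ⟨x, hx, y, hy, hxy⟩ := one_lt_card.mp ht
    have hsqrt : √(#P : ℝ) < 2 := by
      rw [Real.sqrt_lt' two_pos]; norm_num; exact_mod_cast h
    refine ⟨x, hx, y, hy, hxy, (dist_le_diam_of_mem hbdd hx hy).trans_lt ?_⟩
    exact lt_mul_left (diam_pos ⟨x, hx, y, hy, hxy⟩ hbdd)
      ((one_lt_div (by positivity)).mpr hsqrt)
  · obtain ⟨x, hx, y, hy, hxy, hne⟩ :=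
      Complex.exists_dist_ne_of_card_eq_four h (diam (P : Set ℂ))
    refine ⟨x, hx, y, hy, hxy, ?_⟩
    rw [h, show √((4 : ℕ) : ℝ) = 2 by norm_num, div_self two_ne_zero, one_mul]
    exact (dist_le_diam_of_mem hbdd hx hy).lt_of_ne hne
  · obtain ⟨m, n, hm, hn, hmn, hmnP⟩ := exists_grid_dims h
    exact exists_dist_lt_of_grid P hm hn hmn hmnP
end

section
/- For natural numbers s → ∞, ψ(π·(d*)²/ln(4(s+1))) = O(ln ln s); concretely, there are constants c₁, c₂ > 0 (depending on d*) such that for all sufficiently large s, ψ((d*)²π/ln(4(s+1))) ≥ c₁·ln ln s − c₂, where ψ is the inverse of x ↦ (2/x)·arcsin(e^{−x/2}). -/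
/-!
Write `p = ψ y`. The defining equation gives `e^{-p/2} = sin (y p / 2) ≤ y p / 2`; taking
logarithms and using `log p ≤ p - 1` yields `p ≥ (2/3) (log 2 - log y)`. For
`y = (d*)² π / ln (4 (s + 1))` the right-hand side is `(2/3) ln ln (4 (s + 1))` minus a constant.
-/

open Real

lemma exp_neg_half_le_of_two_mul_arcsin_div_eq {p y : ℝ} (hp : 0 < p)
    (h : 2 * arcsin (exp (-p / 2)) / p = y) : exp (-p / 2) ≤ y * p / 2 := by
  have harcsin : arcsin (exp (-p / 2)) = y * p / 2 := by
    rw [← h]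
    field_simp
  have hle_one : exp (-p / 2) ≤ 1 := exp_le_one_iff.mpr (by linarith)
  have hneg_one_le : -1 ≤ exp (-p / 2) := by linarith [exp_pos (-p / 2)]
  calc exp (-p / 2) = sin (arcsin (exp (-p / 2))) := (sin_arcsin hneg_one_le hle_one).symm
    _ = sin (y * p / 2) := by rw [harcsin]
    _ ≤ y * p / 2 := sin_le (harcsin ▸ arcsin_nonneg.mpr (exp_pos _).le)

lemma log_two_sub_log_le_of_two_mul_arcsin_div_eq {p y : ℝ} (hp : 0 < p) (hy : 0 < y)
    (h : 2 * arcsin (exp (-p / 2)) / p = y) : 2 / 3 * (log 2 - log y) ≤ p := by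
  have hlog : -p / 2 ≤ log y + log p - log 2 := by
    rw [← log_exp (-p / 2), ← log_mul hy.ne' hp.ne', ← log_div (by positivity) two_ne_zero]
    exact log_le_log (exp_pos _) (exp_neg_half_le_of_two_mul_arcsin_div_eq hp h)
  linarith [log_le_sub_one_of_pos hp]

theorem stmt_19_general (dstar : ℕ) (hd : 1 ≤ dstar) (ψ : ℝ → ℝ)
    (hψpos : ∀ y > 0, 0 < ψ y)
    (hinv' : ∀ y > 0, 2 * Real.arcsin (Real.exp (-(ψ y) / 2)) / (ψ y) = y) :
    ∃ c₁ > (0 : ℝ), ∃ c₂ > (0 : ℝ), ∃ N : ℕ, ∀ s : ℕ, N ≤ s →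
      c₁ * Real.log (Real.log s) - c₂ ≤
        ψ ((dstar : ℝ) ^ 2 * Real.pi / Real.log (4 * (s + 1))) := by
  have hd2 : (1 : ℝ) ≤ (dstar : ℝ) ^ 2 := one_le_pow₀ (by exact_mod_cast hd)
  have hconst : 1 < (dstar : ℝ) ^ 2 * π / 2 := by nlinarith [pi_gt_three]
  refine ⟨2 / 3, by norm_num, 2 / 3 * log ((dstar : ℝ) ^ 2 * π / 2),
    by have := log_pos hconst; positivity, 2, fun s hs => ?_⟩
  have hs2 : (2 : ℝ) ≤ s := by exact_mod_cast hs
  have hL : 0 < log (4 * ((s : ℝ) + 1)) := log_pos (by linarith)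
  have hy : 0 < (dstar : ℝ) ^ 2 * π / log (4 * (s + 1)) := by positivity
  have hkey := log_two_sub_log_le_of_two_mul_arcsin_div_eq (hψpos _ hy) hy (hinv' _ hy)
  have hloglog : log (log s) ≤ log (log (4 * ((s : ℝ) + 1))) :=
    log_le_log (log_pos (by linarith)) (log_le_log (by linarith) (by linarith))
  rw [log_div (by positivity) hL.ne'] at hkey
  rw [log_div (by positivity) two_ne_zero]
  linarith

/-- Quantified asymptotics of Theorem 3.7: for a fixed integer `d* ≥ 1`, there are
constants `c₁, c₂ > 0` such that for all sufficiently large `s`,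
`ψ((d*)² π / ln(4(s+1))) ≥ c₁ ln ln s − c₂`, where `ψ` is the inverse of
`x ↦ (2/x) arcsin(e^{−x/2})` on `(0, ∞)`. -/
theorem stmt_19 (dstar : ℕ) (hd : 1 ≤ dstar) (ψ : ℝ → ℝ)
    (hψpos : ∀ y > 0, 0 < ψ y)
    (hinv : ∀ x > 0, ψ (2 * Real.arcsin (Real.exp (-x / 2)) / x) = x)
    (hinv' : ∀ y > 0, 2 * Real.arcsin (Real.exp (-(ψ y) / 2)) / (ψ y) = y) :
    ∃ c₁ > (0 : ℝ), ∃ c₂ > (0 : ℝ), ∃ N : ℕ, ∀ s : ℕ, N ≤ s →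
      c₁ * Real.log (Real.log s) - c₂ ≤
        ψ ((dstar : ℝ) ^ 2 * Real.pi / Real.log (4 * (s + 1))) :=
  stmt_19_general dstar hd ψ hψpos hinv'
end
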